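/- (SWAP has no entangling capability) Let d be a positive integer and let S be the SWAP matrix indexed by Fin d × Fin d, with entries S (a,b) (a',b') = 1 if a = b' and b = a' and 0 otherwise. Then e(S) = 0 and Δ²(S) = 0. -/

import Mathlib

noncomputable section

open Matrix
open scoped Kronecker

/-- The swap `T₁₃` of subsystems 1 and 3 on the two-copy space. -/
def T13 (d₁ d₂ : ℕ) :
    Matrix ((Fin d₁ × Fin d₂) × (Fin d₁ × Fin d₂)) ((Fin d₁ × Fin d₂) × (Fin d₁ × Fin d₂)) ℂ :=
  Matrix.of fun x y =>
    if x.1.1 = y.2.1 ∧ x.2.1 = y.1.1 ∧ x.1.2 = y.1.2 ∧ x.2.2 = y.2.2 then 1 else 0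

/-- The swap `T₂₄` of subsystems 2 and 4 on the two-copy space. -/
def T24 (d₁ d₂ : ℕ) :
    Matrix ((Fin d₁ × Fin d₂) × (Fin d₁ × Fin d₂)) ((Fin d₁ × Fin d₂) × (Fin d₁ × Fin d₂)) ℂ :=
  Matrix.of fun x y =>
    if x.1.2 = y.2.2 ∧ x.2.2 = y.1.2 ∧ x.1.1 = y.1.1 ∧ x.2.1 = y.2.1 then 1 else 0

/-- `P₁₃⁺ = (1 + T₁₃)/2`. -/
def P13p (d₁ d₂ : ℕ) := (2 : ℂ)⁻¹ • (1 + T13 d₁ d₂)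

/-- `P₁₃⁻ = (1 − T₁₃)/2`. -/
def P13m (d₁ d₂ : ℕ) := (2 : ℂ)⁻¹ • (1 - T13 d₁ d₂)

/-- `P₂₄⁺ = (1 + T₂₄)/2`. -/
def P24p (d₁ d₂ : ℕ) := (2 : ℂ)⁻¹ • (1 + T24 d₁ d₂)

/-- The entangling power
`e(U) = (8/(d₁(d₁+1)d₂(d₂+1))) · Tr((U⊗U) P₁₃⁺ P₂₄⁺ (U⊗U)ᴴ P₁₃⁻)`. -/
def ePow (d₁ d₂ : ℕ) (U : Matrix (Fin d₁ × Fin d₂) (Fin d₁ × Fin d₂) ℂ) : ℂ :=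
  (8 / ((d₁ : ℂ) * ((d₁ : ℂ) + 1) * (d₂ : ℂ) * ((d₂ : ℂ) + 1))) *
    ((U ⊗ₖ U) * P13p d₁ d₂ * P24p d₁ d₂ * (U ⊗ₖ U)ᴴ * P13m d₁ d₂).trace

/-- The permutation operator on the four-copy space induced by a permutation `σ` of the
four odd positions {1,3,5,7}: it permutes the four `Fin d₁` factors according to `σ`
while fixing all `Fin d₂` factors. -/
def Vodd (d₁ d₂ : ℕ) (σ : Equiv.Perm (Fin 4)) :
    Matrix (Fin 4 → Fin d₁ × Fin d₂) (Fin 4 → Fin d₁ × Fin d₂) ℂ :=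
  Matrix.of fun f g =>
    if (∀ i, (f i).1 = (g (σ⁻¹ i)).1) ∧ (∀ i, (f i).2 = (g i).2) then 1 else 0

/-- The permutation operator on the four-copy space induced by a permutation `σ` of the
four even positions {2,4,6,8}: it permutes the four `Fin d₂` factors according to `σ`
while fixing all `Fin d₁` factors. -/
def Veven (d₁ d₂ : ℕ) (σ : Equiv.Perm (Fin 4)) :
    Matrix (Fin 4 → Fin d₁ × Fin d₂) (Fin 4 → Fin d₁ × Fin d₂) ℂ :=
  Matrix.of fun f g =>
    if (∀ i, (f i).2 = (g (σ⁻¹ i)).2) ∧ (∀ i, (f i).1 = (g i).1) then 1 else 0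

/-- `P₁₃₅₇⁺`: the average of the 24 permutation operators over all permutations of the
odd positions {1,3,5,7}. -/
def P1357 (d₁ d₂ : ℕ) :
    Matrix (Fin 4 → Fin d₁ × Fin d₂) (Fin 4 → Fin d₁ × Fin d₂) ℂ :=
  ((Nat.factorial 4 : ℂ))⁻¹ • ∑ σ : Equiv.Perm (Fin 4), Vodd d₁ d₂ σ

/-- `P₂₄₆₈⁺`: the average of the 24 permutation operators over all permutations of the
even positions {2,4,6,8}. -/
def P2468 (d₁ d₂ : ℕ) :
    Matrix (Fin 4 → Fin d₁ × Fin d₂) (Fin 4 → Fin d₁ × Fin d₂) ℂ :=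
  ((Nat.factorial 4 : ℂ))⁻¹ • ∑ σ : Equiv.Perm (Fin 4), Veven d₁ d₂ σ

/-- `T₁₃` on the four-copy space: the swap of subsystems 1 and 3. -/
def T13c (d₁ d₂ : ℕ) := Vodd d₁ d₂ (Equiv.swap (0 : Fin 4) 1)

/-- `T₅₇` on the four-copy space: the swap of subsystems 5 and 7. -/
def T57c (d₁ d₂ : ℕ) := Vodd d₁ d₂ (Equiv.swap (2 : Fin 4) 3)

/-- `P₁₃⁻ = (1 − T₁₃)/2` on the four-copy space. -/
def P13mc (d₁ d₂ : ℕ) := (2 : ℂ)⁻¹ • (1 - T13c d₁ d₂)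

/-- `P₅₇⁻ = (1 − T₅₇)/2` on the four-copy space. -/
def P57mc (d₁ d₂ : ℕ) := (2 : ℂ)⁻¹ • (1 - T57c d₁ d₂)

/-- The fourfold Kronecker power `U^{⊗4}`. -/
def kpow4 (d₁ d₂ : ℕ) (U : Matrix (Fin d₁ × Fin d₂) (Fin d₁ × Fin d₂) ℂ) :
    Matrix (Fin 4 → Fin d₁ × Fin d₂) (Fin 4 → Fin d₁ × Fin d₂) ℂ :=
  Matrix.of fun f g => ∏ i, U (f i) (g i)

/-- `D_d = 1/(d(d+1)(d+2)(d+3))`. -/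
def Dc (d : ℕ) : ℂ := 1 / ((d : ℂ) * ((d : ℂ) + 1) * ((d : ℂ) + 2) * ((d : ℂ) + 3))

/-- The squared entangling power deviation
`Δ²(U) = 4·(4!)²·D_{d₁}·D_{d₂}·Tr(U^{⊗4} P₁₃₅₇⁺ P₂₄₆₈⁺ (U^{⊗4})ᴴ P₁₃⁻ P₅₇⁻) − e(U)²`. -/
def deltaSq (d₁ d₂ : ℕ) (U : Matrix (Fin d₁ × Fin d₂) (Fin d₁ × Fin d₂) ℂ) : ℂ :=
  4 * (Nat.factorial 4 : ℂ) ^ 2 * Dc d₁ * Dc d₂ *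
      (kpow4 d₁ d₂ U * P1357 d₁ d₂ * P2468 d₁ d₂ * (kpow4 d₁ d₂ U)ᴴ *
        P13mc d₁ d₂ * P57mc d₁ d₂).trace -
    (ePow d₁ d₂ U) ^ 2

/-- The SWAP matrix on `Fin d × Fin d`. -/
def Sw (d : ℕ) : Matrix (Fin d × Fin d) (Fin d × Fin d) ℂ :=
  Matrix.of fun x y => if x.1 = y.2 ∧ x.2 = y.1 then 1 else 0

/-!
Conjugation by `SWAP ⊗ SWAP` (resp. `SWAP^{⊗4}`) is a permutation of the tensor factors that
exchanges odd and even subsystems, so it turns `P₁₃⁺ P₂₄⁺` into `P₂₄⁺ P₁₃⁺` and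
`P₁₃₅₇⁺ P₂₄₆₈⁺` into `P₂₄₆₈⁺ P₁₃₅₇⁺`. The operators under both traces then vanish, because
`P₁₃⁺ P₁₃⁻ = 0` and the symmetrizer `P₁₃₅₇⁺` absorbs `T₁₃`.
-/

open Equiv

section PermMatrix

variable {n R : Type*} [DecidableEq n]

theorem permMatrix_apply [Zero R] [One R] (σ : Perm n) (i j : n) :
    σ.permMatrix R i j = if σ i = j then 1 else 0 := by
  simp [Equiv.toPEquiv_apply]

theorem kronecker_permMatrix {m : Type*} [DecidableEq m] [MulZeroOneClass R]
    (σ : Perm n) (τ : Perm m) :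
    σ.permMatrix R ⊗ₖ τ.permMatrix R = Perm.permMatrix R (σ.prodCongr τ) := by
  ext ⟨a, b⟩ ⟨c, e⟩
  simp only [kronecker_apply, permMatrix_apply, Equiv.prodCongr_apply, Prod.map_apply,
    Prod.mk.injEq, ite_zero_mul_ite_zero, mul_one]

theorem permMatrix_mul_conjTranspose [Fintype n] [NonAssocSemiring R] [StarRing R]
    (σ : Perm n) : σ.permMatrix R * (σ.permMatrix R)ᴴ = 1 := by
  rw [conjTranspose_permMatrix, ← permMatrix_mul, inv_mul_cancel, permMatrix_one]

end PermMatrix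

section RingIdentities

variable {M : Type*}

theorem mul_mul_mul_eq_of_exchange [Monoid M] {s s' p q : M} (hs : s * s' = 1)
    (hp : s * p = q * s) (hq : s * q = p * s) : s * p * q * s' = q * p :=
  calc s * p * q * s' = q * (s * q) * s' := by rw [hp, mul_assoc q]
    _ = q * p * (s * s') := by rw [hq]; simp only [mul_assoc]
    _ = q * p := by rw [hs, mul_one]

theorem one_add_mul_one_sub_eq_zero [Ring M] {t : M} (ht : t * t = 1) :
    (1 + t) * (1 - t) = 0 := by
  rw [add_mul, one_mul, mul_sub, mul_one, ht]
  abel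

end RingIdentities

section Equivs

variable {ι α β : Type*}

def swapFst : Perm ((α × β) × (α × β)) where
  toFun x := ((x.2.1, x.1.2), (x.1.1, x.2.2))
  invFun x := ((x.2.1, x.1.2), (x.1.1, x.2.2))
  left_inv _ := rfl
  right_inv _ := rfl

def swapSnd : Perm ((α × β) × (α × β)) where
  toFun x := ((x.1.1, x.2.2), (x.2.1, x.1.2))
  invFun x := ((x.1.1, x.2.2), (x.2.1, x.1.2))
  left_inv _ := rfl
  right_inv _ := rfl

def permFst (σ : Perm ι) : Perm (ι → α × β) where
  toFun f j := ((f (σ j)).1, (f j).2)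
  invFun f j := ((f (σ⁻¹ j)).1, (f j).2)
  left_inv f := funext fun j => by simp
  right_inv f := funext fun j => by simp

def permSnd (σ : Perm ι) : Perm (ι → α × β) where
  toFun f j := ((f j).1, (f (σ j)).2)
  invFun f j := ((f j).1, (f (σ⁻¹ j)).2)
  left_inv f := funext fun j => by simp
  right_inv f := funext fun j => by simp

end Equivs

section TwoCopies

variable (d₁ d₂ d : ℕ)

theorem T13_eq_permMatrix : T13 d₁ d₂ = swapFst.permMatrix ℂ := by
  ext x y
  simp only [T13, of_apply, permMatrix_apply, swapFst, coe_fn_mk, Prod.ext_iff]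
  exact if_congr (by tauto) rfl rfl

theorem T24_eq_permMatrix : T24 d₁ d₂ = swapSnd.permMatrix ℂ := by
  ext x y
  simp only [T24, of_apply, permMatrix_apply, swapSnd, coe_fn_mk, Prod.ext_iff]
  exact if_congr (by tauto) rfl rfl

theorem Sw_eq_permMatrix : Sw d = Perm.permMatrix ℂ (prodComm (Fin d) (Fin d)) := by
  ext x y
  simp only [Sw, of_apply, permMatrix_apply, prodComm_apply, Prod.ext_iff, Prod.fst_swap,
    Prod.snd_swap]
  exact if_congr (by tauto) rfl rfl

theorem T13_mul_self : T13 d₁ d₂ * T13 d₁ d₂ = 1 := by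
  rw [T13_eq_permMatrix, ← permMatrix_mul, show swapFst * swapFst = 1 from rfl, permMatrix_one]

theorem P13p_mul_P13m : P13p d₁ d₂ * P13m d₁ d₂ = 0 := by
  rw [P13p, P13m, smul_mul_smul, one_add_mul_one_sub_eq_zero (T13_mul_self d₁ d₂), smul_zero]

theorem swap_kronecker_mul_T13 :
    (Sw d ⊗ₖ Sw d) * T13 d d = T24 d d * (Sw d ⊗ₖ Sw d) := by
  rw [Sw_eq_permMatrix, kronecker_permMatrix, T13_eq_permMatrix, T24_eq_permMatrix,
    ← permMatrix_mul, ← permMatrix_mul]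
  rfl

theorem swap_kronecker_mul_T24 :
    (Sw d ⊗ₖ Sw d) * T24 d d = T13 d d * (Sw d ⊗ₖ Sw d) := by
  rw [Sw_eq_permMatrix, kronecker_permMatrix, T13_eq_permMatrix, T24_eq_permMatrix,
    ← permMatrix_mul, ← permMatrix_mul]
  rfl

theorem swap_kronecker_mul_P13p :
    (Sw d ⊗ₖ Sw d) * P13p d d = P24p d d * (Sw d ⊗ₖ Sw d) := by
  simp only [P13p, P24p, mul_smul_comm, smul_mul_assoc, mul_add, add_mul, mul_one, one_mul,
    swap_kronecker_mul_T13]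

theorem swap_kronecker_mul_P24p :
    (Sw d ⊗ₖ Sw d) * P24p d d = P13p d d * (Sw d ⊗ₖ Sw d) := by
  simp only [P13p, P24p, mul_smul_comm, smul_mul_assoc, mul_add, add_mul, mul_one, one_mul,
    swap_kronecker_mul_T24]

theorem ePow_swap : ePow d d (Sw d) = 0 := by
  have hunitary : (Sw d ⊗ₖ Sw d) * (Sw d ⊗ₖ Sw d)ᴴ = 1 := by
    rw [Sw_eq_permMatrix, kronecker_permMatrix, permMatrix_mul_conjTranspose]
  rw [ePow, mul_mul_mul_eq_of_exchange hunitary (swap_kronecker_mul_P13p d)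
    (swap_kronecker_mul_P24p d), mul_assoc (P24p d d), P13p_mul_P13m, mul_zero, trace_zero,
    mul_zero]

end TwoCopies

section FourCopies

variable (d₁ d₂ d : ℕ)

theorem Vodd_eq_permMatrix (σ : Perm (Fin 4)) :
    Vodd d₁ d₂ σ = (permFst σ).permMatrix ℂ := by
  ext f g
  simp only [Vodd, of_apply, permMatrix_apply, permFst, coe_fn_mk, funext_iff, Prod.ext_iff]
  refine if_congr
    ⟨fun ⟨h₁, h₂⟩ j => ⟨?_, h₂ j⟩, fun h => ⟨fun i => ?_, fun i => (h i).2⟩⟩ rfl rfl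
  · simpa using h₁ (σ j)
  · simpa using (h (σ⁻¹ i)).1

theorem Veven_eq_permMatrix (σ : Perm (Fin 4)) :
    Veven d₁ d₂ σ = (permSnd σ).permMatrix ℂ := by
  ext f g
  simp only [Veven, of_apply, permMatrix_apply, permSnd, coe_fn_mk, funext_iff, Prod.ext_iff]
  refine if_congr
    ⟨fun ⟨h₁, h₂⟩ j => ⟨h₂ j, ?_⟩, fun h => ⟨fun i => ?_, fun i => (h i).1⟩⟩ rfl rfl
  · simpa using h₁ (σ j)
  · simpa using (h (σ⁻¹ i)).2

theorem Vodd_mul_Vodd (σ τ : Perm (Fin 4)) :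
    Vodd d₁ d₂ σ * Vodd d₁ d₂ τ = Vodd d₁ d₂ (σ * τ) := by
  rw [Vodd_eq_permMatrix, Vodd_eq_permMatrix, Vodd_eq_permMatrix, ← permMatrix_mul]
  rfl

theorem P1357_mul_Vodd (τ : Perm (Fin 4)) : P1357 d₁ d₂ * Vodd d₁ d₂ τ = P1357 d₁ d₂ := by
  rw [P1357, smul_mul_assoc, Finset.sum_mul]
  simp only [Vodd_mul_Vodd]
  exact congrArg _ (Equiv.sum_comp (Equiv.mulRight τ) (Vodd d₁ d₂))

theorem P1357_mul_P13mc : P1357 d₁ d₂ * P13mc d₁ d₂ = 0 := by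
  rw [P13mc, T13c, mul_smul_comm, mul_sub, mul_one, P1357_mul_Vodd, sub_self, smul_zero]

theorem kpow4_permMatrix (σ : Perm (Fin d₁ × Fin d₂)) :
    kpow4 d₁ d₂ (σ.permMatrix ℂ) = Perm.permMatrix ℂ (piCongrRight fun _ : Fin 4 => σ) := by
  ext f g
  simp only [kpow4, of_apply, permMatrix_apply, Finset.prod_boole, Finset.mem_univ,
    true_implies, funext_iff, piCongrRight_apply, Pi.map_apply]

theorem kpow4_swap_mul_Vodd (σ : Perm (Fin 4)) :
    kpow4 d d (Sw d) * Vodd d d σ = Veven d d σ * kpow4 d d (Sw d) := by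
  rw [Sw_eq_permMatrix, kpow4_permMatrix, Vodd_eq_permMatrix, Veven_eq_permMatrix,
    ← permMatrix_mul, ← permMatrix_mul]
  rfl

theorem kpow4_swap_mul_Veven (σ : Perm (Fin 4)) :
    kpow4 d d (Sw d) * Veven d d σ = Vodd d d σ * kpow4 d d (Sw d) := by
  rw [Sw_eq_permMatrix, kpow4_permMatrix, Vodd_eq_permMatrix, Veven_eq_permMatrix,
    ← permMatrix_mul, ← permMatrix_mul]
  rfl

theorem kpow4_swap_mul_P1357 :
    kpow4 d d (Sw d) * P1357 d d = P2468 d d * kpow4 d d (Sw d) := by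
  simp only [P1357, P2468, mul_smul_comm, smul_mul_assoc, Finset.mul_sum, Finset.sum_mul,
    kpow4_swap_mul_Vodd]

theorem kpow4_swap_mul_P2468 :
    kpow4 d d (Sw d) * P2468 d d = P1357 d d * kpow4 d d (Sw d) := by
  simp only [P1357, P2468, mul_smul_comm, smul_mul_assoc, Finset.mul_sum, Finset.sum_mul,
    kpow4_swap_mul_Veven]

end FourCopies

theorem ePow_deltaSq_swap_general (d : ℕ) :
    ePow d d (Sw d) = 0 ∧ deltaSq d d (Sw d) = 0 := by
  have hunitary : kpow4 d d (Sw d) * (kpow4 d d (Sw d))ᴴ = 1 := by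
    rw [Sw_eq_permMatrix, kpow4_permMatrix, permMatrix_mul_conjTranspose]
  refine ⟨ePow_swap d, ?_⟩
  rw [deltaSq, mul_mul_mul_eq_of_exchange hunitary (kpow4_swap_mul_P1357 d)
    (kpow4_swap_mul_P2468 d), mul_assoc (P2468 d d), P1357_mul_P13mc, mul_zero, zero_mul,
    trace_zero, mul_zero, ePow_swap, sq, mul_zero, sub_zero]

/-- (SWAP has no entangling capability) The SWAP operation has vanishing entangling
power and vanishing squared entangling power deviation. -/
theorem ePow_deltaSq_swap (d : ℕ) (hd : 0 < d) :
    ePow d d (Sw d) = 0 ∧ deltaSq d d (Sw d) = 0 :=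
  ePow_deltaSq_swap_general d
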